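/- arXiv:2603.13569 — 3 statements merged into one kernel-verified Lean document; each statement's English description precedes it below -/
import Mathlib

section
/- A Boolean algebra is an injective object in the category of Boolean algebras (with respect to embeddings) if and only if it is complete. -/
universe u

section Helpers

variable {Y : Type*} [BooleanAlgebra Y]

private lemma ba_split (d u : Y) : (d ⊓ u) ⊔ (d ⊓ uᶜ) = d := by rw [← inf_sup_left]; simp

private lemma ba_inf (p q r s u : Y) :
    ((p ⊓ u) ⊔ (q ⊓ uᶜ)) ⊓ ((r ⊓ u) ⊔ (s ⊓ uᶜ)) = ((p ⊓ r) ⊓ u) ⊔ ((q ⊓ s) ⊓ uᶜ) := by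
  simp [inf_sup_left, inf_sup_right, inf_assoc, inf_left_comm, inf_comm, inf_left_idem]

private lemma ba_le_split (x y u : Y) : x ⊓ y ≤ (x ⊓ u) ⊔ (y ⊓ uᶜ) := by
  calc x ⊓ y = (x ⊓ y ⊓ u) ⊔ (x ⊓ y ⊓ uᶜ) := (ba_split _ _).symm
  _ ≤ _ := sup_le_sup (inf_le_inf_right _ inf_le_left) (inf_le_inf_right _ inf_le_right)

private lemma ba_compl (p q u : Y) : ((p ⊓ u) ⊔ (q ⊓ uᶜ))ᶜ = (pᶜ ⊓ u) ⊔ (qᶜ ⊓ uᶜ) := by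
  rw [compl_sup, compl_inf, compl_inf, compl_compl]
  have : (pᶜ ⊔ uᶜ) ⊓ (qᶜ ⊔ u) = (pᶜ ⊓ u) ⊔ (qᶜ ⊓ uᶜ) ⊔ (pᶜ ⊓ qᶜ) := by
    simp only [inf_sup_left, inf_sup_right, compl_inf_eq_bot, inf_compl_eq_bot, sup_bot_eq,
      bot_sup_eq]
    ac_rfl
  rw [this, sup_eq_left.2 (ba_le_split pᶜ qᶜ u)]

private lemma hom_map_compl {A B : Type*} [BooleanAlgebra A] [BooleanAlgebra B]
    (g : BoundedLatticeHom A B) (a : A) : g aᶜ = (g a)ᶜ := by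
  have : IsCompl (g a) (g aᶜ) :=
    ⟨by rw [disjoint_iff, ← map_inf]; simp, by rw [codisjoint_iff, ← map_sup]; simp⟩
  exact this.compl_eq.symm

end Helpers

/-- Sikorski's extension theorem: a Boolean algebra in which every subset has a
supremum is injective with respect to embeddings. -/
private lemma sikorski {X : Type u} [BooleanAlgebra X]
    (hc : ∀ S : Set X, ∃ s, IsLUB S s)
    {A B : Type u} [BooleanAlgebra A] [BooleanAlgebra B]
    (g : BoundedLatticeHom A B) (hg : Function.Injective g)
    (f : BoundedLatticeHom A X) : ∃ h : BoundedLatticeHom B X, h.comp g = f := by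
  classical
  -- partial homomorphisms as graphs
  set S : Set (Set (B × X)) :=
    {Γ | (∀ a : A, (g a, f a) ∈ Γ) ∧
         (∀ p ∈ Γ, ∀ q ∈ Γ, p.1 = q.1 → p.2 = q.2) ∧
         (∀ p ∈ Γ, ∀ q ∈ Γ, (p.1 ⊔ q.1, p.2 ⊔ q.2) ∈ Γ) ∧
         (∀ p ∈ Γ, ∀ q ∈ Γ, (p.1 ⊓ q.1, p.2 ⊓ q.2) ∈ Γ) ∧
         (∀ p ∈ Γ, (p.1ᶜ, p.2ᶜ) ∈ Γ)} with hSdef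
  have hΓ₀ : (Set.range fun a : A => ((g a, f a) : B × X)) ∈ S := by
    refine ⟨fun a => ⟨a, rfl⟩, ?_, ?_, ?_, ?_⟩
    · rintro _ ⟨a, rfl⟩ _ ⟨b, rfl⟩ h
      dsimp at h ⊢
      rw [hg h]
    · rintro _ ⟨a, rfl⟩ _ ⟨b, rfl⟩
      exact ⟨a ⊔ b, by simp⟩
    · rintro _ ⟨a, rfl⟩ _ ⟨b, rfl⟩
      exact ⟨a ⊓ b, by simp⟩
    · rintro _ ⟨a, rfl⟩
      exact ⟨aᶜ, by simp [hom_map_compl]⟩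
  have hchain : ∀ c ⊆ S, IsChain (· ⊆ ·) c → c.Nonempty →
      ∃ ub ∈ S, ∀ s ∈ c, s ⊆ ub := by
    rintro c hcS hcC ⟨Γc, hΓc⟩
    refine ⟨⋃₀ c, ⟨fun a => ⟨Γc, hΓc, (hcS hΓc).1 a⟩, ?_, ?_, ?_, ?_⟩,
      fun s hs => Set.subset_sUnion_of_mem hs⟩
    · rintro p ⟨Γ₁, h₁, hp⟩ q ⟨Γ₂, h₂, hq⟩ he
      rcases hcC.total h₁ h₂ with h | h
      · exact (hcS h₂).2.1 p (h hp) q hq he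
      · exact (hcS h₁).2.1 p hp q (h hq) he
    · rintro p ⟨Γ₁, h₁, hp⟩ q ⟨Γ₂, h₂, hq⟩
      rcases hcC.total h₁ h₂ with h | h
      · exact ⟨Γ₂, h₂, (hcS h₂).2.2.1 p (h hp) q hq⟩
      · exact ⟨Γ₁, h₁, (hcS h₁).2.2.1 p hp q (h hq)⟩
    · rintro p ⟨Γ₁, h₁, hp⟩ q ⟨Γ₂, h₂, hq⟩
      rcases hcC.total h₁ h₂ with h | h
      · exact ⟨Γ₂, h₂, (hcS h₂).2.2.2.1 p (h hp) q hq⟩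
      · exact ⟨Γ₁, h₁, (hcS h₁).2.2.2.1 p hp q (h hq)⟩
    · rintro p ⟨Γ₁, h₁, hp⟩
      exact ⟨Γ₁, h₁, (hcS h₁).2.2.2.2 p hp⟩
  obtain ⟨Γ, -, hmax⟩ := zorn_subset_nonempty S hchain _ hΓ₀
  obtain ⟨hP1, hP2, hPsup, hPinf, hPcompl⟩ := hmax.1
  have htop : ((⊤ : B), (⊤ : X)) ∈ Γ := by simpa using hP1 ⊤
  have hbot : ((⊥ : B), (⊥ : X)) ∈ Γ := by simpa using hP1 ⊥
  have mono : ∀ p ∈ Γ, ∀ q ∈ Γ, p.1 ≤ q.1 → p.2 ≤ q.2 := by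
    intro p hp q hq hle
    have hm := hPsup p hp q hq
    have he : p.2 ⊔ q.2 = q.2 := hP2 _ hm q hq (sup_eq_right.2 hle)
    exact sup_eq_right.1 he
  have total : ∀ b : B, ∃ x, (b, x) ∈ Γ := by
    by_contra hb
    push_neg at hb
    obtain ⟨b₀, hb₀⟩ := hb
    set L : Set X := {x | ∃ cb, (cb, x) ∈ Γ ∧ cb ≤ b₀} with hLdef
    obtain ⟨c₀, hc₀⟩ := hc L
    have key1 : ∀ p ∈ Γ, ∀ q ∈ Γ, p.1 ⊓ b₀ ≤ q.1 → p.2 ⊓ c₀ ≤ q.2 ⊓ c₀ := by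
      intro p hp q hq hle
      have hmem := hPsup q hq _ (hPcompl p hp)
      -- hmem : (q.1 ⊔ p.1ᶜ, q.2 ⊔ p.2ᶜ) ∈ Γ
      have hub : c₀ ≤ q.2 ⊔ p.2ᶜ := by
        apply hc₀.2
        rintro x ⟨cb, hcx, hcb⟩
        refine mono _ hcx _ hmem ?_
        calc cb ≤ b₀ := hcb
        _ ≤ q.1 ⊔ p.1ᶜ := by
          rw [sup_comm, ← sdiff_le_iff, sdiff_eq, compl_compl, inf_comm]
          exact hle
      refine le_inf ?_ inf_le_right
      calc p.2 ⊓ c₀ ≤ p.2 ⊓ (q.2 ⊔ p.2ᶜ) := inf_le_inf_left _ hub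
      _ = p.2 ⊓ q.2 := by rw [inf_sup_left]; simp
      _ ≤ q.2 := inf_le_right
    have key2 : ∀ p ∈ Γ, ∀ q ∈ Γ, p.1 ⊓ b₀ᶜ ≤ q.1 → p.2 ⊓ c₀ᶜ ≤ q.2 ⊓ c₀ᶜ := by
      intro p hp q hq hle
      have hmem := hPinf p hp _ (hPcompl q hq)
      -- hmem : (p.1 ⊓ q.1ᶜ, p.2 ⊓ q.2ᶜ) ∈ Γ
      have hle' : p.1 ⊓ q.1ᶜ ≤ b₀ := by
        rw [← sdiff_eq, sdiff_le_iff]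
        rw [← sdiff_eq, sdiff_le_iff] at hle
        rwa [sup_comm]
      have hub : p.2 ⊓ q.2ᶜ ≤ c₀ := hc₀.1 ⟨p.1 ⊓ q.1ᶜ, hmem, hle'⟩
      have hub' : p.2 \ q.2 ≤ c₀ := by rwa [sdiff_eq]
      have h1 : p.2 ⊓ c₀ᶜ ≤ q.2 := by
        rw [← sdiff_eq, sdiff_le_iff]
        exact le_sdiff_sup.trans (sup_le_sup_right hub' _)
      exact le_inf h1 inf_le_right
    -- one-step extension
    set Γ' : Set (B × X) := {r | ∃ p ∈ Γ, ∃ q ∈ Γ,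
      r = ((p.1 ⊓ b₀) ⊔ (q.1 ⊓ b₀ᶜ), (p.2 ⊓ c₀) ⊔ (q.2 ⊓ c₀ᶜ))} with hΓ'def
    have hsub : Γ ⊆ Γ' := fun p hp =>
      ⟨p, hp, p, hp, by rw [ba_split, ba_split]⟩
    have hΓ'S : Γ' ∈ S := by
      refine ⟨fun a => hsub (hP1 a), ?_, ?_, ?_, ?_⟩
      · rintro r ⟨p, hp, q, hq, rfl⟩ r' ⟨p', hp', q', hq', rfl⟩ he
        dsimp at he ⊢
        have e1 : p.1 ⊓ b₀ = p'.1 ⊓ b₀ := by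
          have := congrArg (· ⊓ b₀) he
          simpa [inf_sup_right, inf_assoc] using this
        have e2 : q.1 ⊓ b₀ᶜ = q'.1 ⊓ b₀ᶜ := by
          have := congrArg (· ⊓ b₀ᶜ) he
          simpa [inf_sup_right, inf_assoc] using this
        have c1 : p.2 ⊓ c₀ = p'.2 ⊓ c₀ :=
          le_antisymm (key1 p hp p' hp' (e1.le.trans inf_le_left))
            (key1 p' hp' p hp (e1.ge.trans inf_le_left))
        have c2 : q.2 ⊓ c₀ᶜ = q'.2 ⊓ c₀ᶜ :=
          le_antisymm (key2 q hq q' hq' (e2.le.trans inf_le_left))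
            (key2 q' hq' q hq (e2.ge.trans inf_le_left))
        rw [c1, c2]
      · rintro r ⟨p, hp, q, hq, rfl⟩ r' ⟨p', hp', q', hq', rfl⟩
        refine ⟨_, hPsup p hp p' hp', _, hPsup q hq q' hq', ?_⟩
        dsimp
        rw [Prod.ext_iff]
        constructor
        · dsimp; rw [inf_sup_right, inf_sup_right]; ac_rfl
        · dsimp; rw [inf_sup_right, inf_sup_right]; ac_rfl
      · rintro r ⟨p, hp, q, hq, rfl⟩ r' ⟨p', hp', q', hq', rfl⟩
        refine ⟨_, hPinf p hp p' hp', _, hPinf q hq q' hq', ?_⟩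
        simp only [Prod.mk.injEq]
        exact ⟨ba_inf _ _ _ _ _, ba_inf _ _ _ _ _⟩
      · rintro r ⟨p, hp, q, hq, rfl⟩
        refine ⟨_, hPcompl p hp, _, hPcompl q hq, ?_⟩
        simp only [Prod.mk.injEq]
        exact ⟨ba_compl _ _ _, ba_compl _ _ _⟩
    have hmem : (b₀, c₀) ∈ Γ' :=
      ⟨(⊤, ⊤), htop, (⊥, ⊥), hbot, by simp⟩
    exact hb₀ c₀ (hmax.2 hΓ'S hsub hmem)
  choose H hH using total
  have hmap_sup : ∀ b c : B, H (b ⊔ c) = H b ⊔ H c := fun b c =>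
    hP2 _ (hH (b ⊔ c)) ((b, H b).1 ⊔ (c, H c).1, (b, H b).2 ⊔ (c, H c).2)
      (hPsup _ (hH b) _ (hH c)) rfl
  have hmap_inf : ∀ b c : B, H (b ⊓ c) = H b ⊓ H c := fun b c =>
    hP2 _ (hH (b ⊓ c)) ((b, H b).1 ⊓ (c, H c).1, (b, H b).2 ⊓ (c, H c).2)
      (hPinf _ (hH b) _ (hH c)) rfl
  have hmap_top : H ⊤ = ⊤ := hP2 _ (hH ⊤) _ htop rfl
  have hmap_bot : H ⊥ = ⊥ := hP2 _ (hH ⊥) _ hbot rfl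
  refine ⟨{ toFun := H, map_sup' := hmap_sup, map_inf' := hmap_inf,
            map_top' := hmap_top, map_bot' := hmap_bot }, ?_⟩
  ext a
  exact hP2 _ (hH (g a)) _ (hP1 a) rfl

/-- A Boolean algebra is an injective object in the category of Boolean algebras with
respect to embeddings if and only if it is complete (every subset has a supremum). -/
theorem boolean_injective_iff_complete {X : Type u} [BooleanAlgebra X] :
    (∀ (A B : Type u) [BooleanAlgebra A] [BooleanAlgebra B]
        (g : BoundedLatticeHom A B), Function.Injective g →
        ∀ f : BoundedLatticeHom A X, ∃ h : BoundedLatticeHom B X, h.comp g = f) ↔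
    (∀ S : Set X, ∃ s : X, IsLUB S s) := by
  constructor
  · intro hinj S
    classical
    -- Stone representation: embed X into the powerset of its prime ideals
    let T := {J : Order.Ideal X // Order.Ideal.IsPrime J}
    have sep : ∀ u v : X, ¬ u ≤ v →
        ∃ J : Order.Ideal X, Order.Ideal.IsPrime J ∧ u ∉ J ∧ v ∈ J := by
      intro u v h
      have hdisj : Disjoint (↑(Order.PFilter.principal u) : Set X)
          (↑(Order.Ideal.principal v)) := by
        rw [Set.disjoint_left]
        intro z hz1 hz2
        exact h (le_trans hz1 hz2)
      obtain ⟨J, hJp, hJI, hJd⟩ :=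
        DistribLattice.prime_ideal_of_disjoint_filter_ideal hdisj
      refine ⟨J, hJp, fun hu => Set.disjoint_left.1 hJd ?_ hu,
        hJI (Order.Ideal.mem_principal.2 le_rfl)⟩
      exact Order.PFilter.mem_principal.2 le_rfl
    let G : BoundedLatticeHom X (Set T) :=
      { toFun := fun x => {J : T | x ∉ J.1}
        map_sup' := by
          intro x y
          ext J
          have : x ⊔ y ∈ J.1 ↔ x ∈ J.1 ∧ y ∈ J.1 :=
            ⟨fun h => ⟨J.1.lower le_sup_left h, J.1.lower le_sup_right h⟩,
             fun ⟨h1, h2⟩ => J.1.sup_mem h1 h2⟩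
          simp only [Set.mem_setOf_eq, Set.sup_eq_union, Set.mem_union, this, not_and_or]
        map_inf' := by
          intro x y
          ext J
          have : x ⊓ y ∈ J.1 ↔ x ∈ J.1 ∨ y ∈ J.1 :=
            ⟨fun h => J.2.mem_or_mem h,
             fun h => h.elim (fun h1 => J.1.lower inf_le_left h1)
               (fun h2 => J.1.lower inf_le_right h2)⟩
          simp only [Set.mem_setOf_eq, Set.inf_eq_inter, Set.mem_inter_iff, this, not_or]
        map_top' := by
          ext J
          simp only [Set.mem_setOf_eq, Set.top_eq_univ, Set.mem_univ, iff_true]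
          exact Order.Ideal.IsProper.top_notMem J.2.toIsProper
        map_bot' := by
          ext J
          simp only [Set.mem_setOf_eq, Set.bot_eq_empty, Set.mem_empty_iff_false, iff_false,
            not_not]
          exact J.1.bot_mem }
    have hGapp : ∀ x : X, G x = {J : T | x ∉ J.1} := fun _ => rfl
    have hGle : ∀ {u v : X}, u ≤ v → G u ≤ G v := by
      intro u v huv
      rw [← sup_eq_right] at huv ⊢
      rw [← map_sup, huv]
    have hGinj : Function.Injective G := by
      intro x y hxy
      by_contra hne
      have : ¬ x ≤ y ∨ ¬ y ≤ x := by
        by_contra hcon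
        push_neg at hcon
        exact hne (le_antisymm hcon.1 hcon.2)
      rcases this with h | h
      · obtain ⟨J, hJp, hxJ, hyJ⟩ := sep x y h
        have h1 : (⟨J, hJp⟩ : T) ∈ G x := hxJ
        rw [hxy] at h1
        exact h1 hyJ
      · obtain ⟨J, hJp, hyJ, hxJ⟩ := sep y x h
        have h1 : (⟨J, hJp⟩ : T) ∈ G y := hyJ
        rw [← hxy] at h1
        exact h1 hxJ
    obtain ⟨h, hcomp⟩ := hinj X (Set T) G hGinj (BoundedLatticeHom.id X)
    have hid : ∀ x : X, h (G x) = x := fun x => by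
      have := DFunLike.congr_fun hcomp x
      simpa using this
    have hmono : ∀ {u v : Set T}, u ≤ v → h u ≤ h v := by
      intro u v huv
      rw [← sup_eq_right] at huv ⊢
      rw [← map_sup, huv]
    refine ⟨h (sSup (G '' S)), ?_, ?_⟩
    · intro x hx
      calc x = h (G x) := (hid x).symm
      _ ≤ h (sSup (G '' S)) := hmono (le_sSup ⟨x, hx, rfl⟩)
    · intro y hy
      calc h (sSup (G '' S)) ≤ h (G y) := by
            refine hmono (sSup_le ?_)
            rintro _ ⟨x, hx, rfl⟩
            exact hGle (hy hx)
      _ = y := hid y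
  · intro hc A B _ _ g hg f
    exact sikorski hc g hg f
end

section
/- If A is a ring with local units, then for every finite subset F of A there exists a single element e ∈ A with e·a = a·e = a for all a ∈ F. -/
/-- If a (possibly non-unital) ring `A` has local units, then for every finite subset
`F` of `A` there is a single element `e` that is a two-sided unit for all elements of
`F`. -/
theorem local_units_finset {A : Type*} [NonUnitalRing A]
    (h : ∀ a : A, ∃ e f : A, a * e = a ∧ f * a = a) :
    ∀ F : Finset A, ∃ e : A, ∀ a ∈ F, e * a = a ∧ a * e = a := by
  classical
  -- Step 1: a common right local unit for any finite set.
  have hr : ∀ F : Finset A, ∃ r : A, ∀ a ∈ F, a * r = a := by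
    intro F
    induction F using Finset.induction_on with
    | empty => exact ⟨0, by simp⟩
    | @insert b s hbs ih =>
      obtain ⟨e, he⟩ := ih
      obtain ⟨e', f', he', -⟩ := h (b - b * e)
      rw [sub_mul, mul_assoc] at he'
      refine ⟨e + e' - e * e', ?_⟩
      intro a ha
      rcases Finset.mem_insert.mp ha with rfl | ha
      · calc a * (e + e' - e * e') = a * e + (a * e' - a * (e * e')) := by noncomm_ring
          _ = a * e + (a - a * e) := by rw [he']
          _ = a := by abel
      · have hae : a * e = a := he a ha
        have h2 : a * (e * e') = a * e' := by rw [← mul_assoc, hae]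
        calc a * (e + e' - e * e') = a * e + (a * e' - a * (e * e')) := by noncomm_ring
          _ = a := by rw [hae, h2]; abel
  -- Step 2: a common left local unit for any finite set.
  have hl : ∀ F : Finset A, ∃ l : A, ∀ a ∈ F, l * a = a := by
    intro F
    induction F using Finset.induction_on with
    | empty => exact ⟨0, by simp⟩
    | @insert b s hbs ih =>
      obtain ⟨f, hf⟩ := ih
      obtain ⟨e', f', -, hf'⟩ := h (b - f * b)
      rw [mul_sub, ← mul_assoc] at hf'
      refine ⟨f + f' - f' * f, ?_⟩
      intro a ha
      rcases Finset.mem_insert.mp ha with rfl | ha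
      · calc (f + f' - f' * f) * a = f * a + (f' * a - f' * f * a) := by noncomm_ring
          _ = f * a + (a - f * a) := by rw [hf']
          _ = a := by abel
      · have hfa : f * a = a := hf a ha
        have h2 : f' * f * a = f' * a := by rw [mul_assoc, hfa]
        calc (f + f' - f' * f) * a = f * a + (f' * a - f' * f * a) := by noncomm_ring
          _ = a := by rw [hfa, h2]; abel
  intro F
  obtain ⟨r, hrF⟩ := hr F
  obtain ⟨l, hlF⟩ := hl F
  refine ⟨l + r - r * l, fun a ha => ?_⟩
  have h1 : a * r = a := hrF a ha
  have h2 : l * a = a := hlF a ha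
  constructor
  · calc (l + r - r * l) * a = l * a + (r * a - r * (l * a)) := by noncomm_ring
      _ = a := by rw [h2]; abel
  · calc a * (l + r - r * l) = a * r + (a * l - a * r * l) := by noncomm_ring
      _ = a := by rw [h1]; abel
end

section
/- Let A be a semi-abelian category (or: the category of groups), let i : X → Y be a normal monomorphism admitting a pseudocomplement i⊥ in the lattice of normal subobjects (ideals) of Y, let p : Y → Z be the cokernel of i⊥, and set ξ := p ∘ i. Then ξ is a normal monomorphism that is essential: every normal monomorphism m : W → Z with m ∧ ξ = 0 in the subobject lattice of Z satisfies W = 0. -/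
/-- In the category of groups: let `X` be a normal subgroup of `G` admitting a
pseudocomplement `K` in the lattice of normal subgroups, let `p : G → G/K` be the
quotient map, and let `ξ` be the composite `X ↪ G → G/K`. Then `ξ` is a normal
monomorphism (injective, with normal image) that is essential: any normal subgroup of
`G/K` meeting the image of `X` trivially is trivial. -/
theorem quotient_by_pseudocomplement_essential {G : Type*} [Group G]
    (X K : Subgroup G) [X.Normal] [K.Normal]
    (hXK : X ⊓ K = ⊥)
    (hmax : ∀ J : Subgroup G, J.Normal → X ⊓ J = ⊥ → J ≤ K) :
    Function.Injective ⇑((QuotientGroup.mk' K).comp X.subtype) ∧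
    (X.map (QuotientGroup.mk' K)).Normal ∧
    (∀ W : Subgroup (G ⧸ K), W.Normal →
      W ⊓ X.map (QuotientGroup.mk' K) = ⊥ → W = ⊥) := by
  refine ⟨?_, ?_, ?_⟩
  · intro a b hab
    have hab' : ((a : G) : G ⧸ K) = ((b : G) : G ⧸ K) := hab
    have h : (a : G)⁻¹ * (b : G) ∈ K := QuotientGroup.eq.mp hab'
    have hx : (a : G)⁻¹ * (b : G) ∈ X := X.mul_mem (X.inv_mem a.2) b.2
    have : (a : G)⁻¹ * (b : G) ∈ X ⊓ K := ⟨hx, h⟩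
    rw [hXK, Subgroup.mem_bot] at this
    exact Subtype.ext (inv_mul_eq_one.mp this)
  · exact Subgroup.Normal.map ‹X.Normal› _ (QuotientGroup.mk'_surjective K)
  · intro W hW hWX
    have hJ : X ⊓ W.comap (QuotientGroup.mk' K) = ⊥ := by
      rw [eq_bot_iff]
      intro x ⟨hx, hxJ⟩
      have : (QuotientGroup.mk' K) x ∈ W ⊓ X.map (QuotientGroup.mk' K) :=
        ⟨hxJ, Subgroup.mem_map_of_mem _ hx⟩
      rw [hWX, Subgroup.mem_bot] at this
      have hxK : x ∈ K := (QuotientGroup.ker_mk' K) ▸ this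
      have : x ∈ X ⊓ K := ⟨hx, hxK⟩
      rwa [hXK] at this
    have hJK : W.comap (QuotientGroup.mk' K) ≤ K :=
      hmax _ (Subgroup.Normal.comap hW _) hJ
    have := Subgroup.map_comap_eq_self_of_surjective
      (QuotientGroup.mk'_surjective K) W
    rw [← this, eq_bot_iff]
    calc (W.comap (QuotientGroup.mk' K)).map (QuotientGroup.mk' K)
        ≤ K.map (QuotientGroup.mk' K) := Subgroup.map_mono hJK
      _ ≤ ⊥ := by
          intro y hy
          obtain ⟨k, hk, rfl⟩ := hy
          simpa [Subgroup.mem_bot, QuotientGroup.eq_one_iff] using hk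
end
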